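/- arXiv:1909.06062 — 2 statements merged into one kernel-verified Lean document; each statement's English description precedes it below -/
import Mathlib

section
/- The Mordell–Tornheim value ζ_MT(1,1,1) = Σ_{m,n≥1} 1/(mn(m+n)) equals 2ζ(3), where ζ is the Riemann zeta function. -/
open Filter Finset Topology

noncomputable def zetaMT (a b c : ℕ) : ℝ :=
  ∑' p : ℕ+ × ℕ+, 1 / ((p.1 : ℝ) ^ a * (p.2 : ℝ) ^ b * ((p.1 : ℝ) + (p.2 : ℝ)) ^ c)

/-!
Summing by rows, the telescoping identity `1/(n(m+n)) = (1/n - 1/(m+n))/m` gives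
`ζ_MT(1,1,1) = ∑_m H_m/m²`. Summing along the diagonals `m + n = k` instead, the partial fractions
`1/(mn(m+n)) = (1/m + 1/n)/(m+n)²` give `ζ_MT(1,1,1) = 2 ∑_k H_{k-1}/k²`, and since
`H_k = H_{k-1} + 1/k` this is `2 (ζ_MT(1,1,1) - ζ(3))`. Both rearrangements are justified by the
absolute convergence that follows from `1/(mn(m+n)) ≤ (mn)^(-3/2)`.
-/

theorem HasSum.sum_antidiagonal {α A : Type*} [AddCommMonoid α] [TopologicalSpace α]
    [ContinuousAdd α] [RegularSpace α] [AddCommMonoid A] [HasAntidiagonal A]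
    {f : A × A → α} {a : α} (h : HasSum f a) :
    HasSum (fun n ↦ ∑ p ∈ antidiagonal n, f p) a :=
  (HasAntidiagonal.sigmaAntidiagonalEquivProd.hasSum_iff.2 h).sigma fun n ↦
    (antidiagonal n).hasSum f

theorem hasSum_sub_add_of_antitone {f : ℕ → ℝ} (hf : Antitone f) (h : Tendsto f atTop (𝓝 0))
    (k : ℕ) : HasSum (fun n ↦ f n - f (n + k)) (∑ i ∈ range k, f i) := by
  rw [hasSum_iff_tendsto_nat_of_nonneg fun n ↦ sub_nonneg.2 (hf (n.le_add_right k))]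
  have hpartial (N : ℕ) : ∑ n ∈ range N, (f n - f (n + k)) =
      ∑ i ∈ range k, f i - ∑ i ∈ range k, f (N + i) := by
    have h₁ := sum_range_add f N k
    have h₂ := sum_range_add f k N
    have h₃ : ∑ n ∈ range N, f (n + k) = ∑ n ∈ range N, f (k + n) :=
      sum_congr rfl fun n _ ↦ by rw [add_comm]
    rw [add_comm k N] at h₂
    rw [sum_sub_distrib, h₃]
    linarith
  have htail : Tendsto (fun N ↦ ∑ i ∈ range k, f (N + i)) atTop (𝓝 0) := by
    simpa using tendsto_finsetSum (range k) fun i _ ↦ h.comp (tendsto_add_atTop_nat i)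
  simpa [hpartial] using tendsto_const_nhds.sub htail

theorem one_div_mul_mul_add_eq {K : Type*} [Field K] {x y : K} (hx : x ≠ 0) (hy : y ≠ 0) :
    1 / (x * y * (x + y)) = (1 / x + 1 / y) / (x + y) ^ 2 := by
  rcases eq_or_ne (x + y) 0 with hxy | hxy
  · simp [hxy]
  · field_simp
    ring

theorem one_div_mul_mul_add_le_rpow {x y : ℝ} (hx : 0 < x) (hy : 0 < y) :
    1 / (x * y * (x + y)) ≤ x ^ (-(3 / 2) : ℝ) * y ^ (-(3 / 2) : ℝ) := by
  have hxy : 0 < x * y := mul_pos hx hy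
  have hsqrt : √(x * y) ≤ x + y := by
    rw [Real.sqrt_le_left (by positivity)]
    nlinarith
  rw [← Real.mul_rpow hx.le hy.le, Real.rpow_neg hxy.le, ← one_div,
    show (3 / 2 : ℝ) = 1 + 1 / 2 by norm_num, Real.rpow_add hxy, Real.rpow_one,
    ← Real.sqrt_eq_rpow]
  gcongr

-- Indexed from `0`, so that the rows and antidiagonals of `ℕ × ℕ` are available.
noncomputable def mtTerm (p : ℕ × ℕ) : ℝ :=
  1 / (((p.1 : ℝ) + 1) * ((p.2 : ℝ) + 1) * (((p.1 : ℝ) + 1) + ((p.2 : ℝ) + 1)))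

theorem zetaMT_one_one_one_eq_tsum_mtTerm : zetaMT 1 1 1 = ∑' p, mtTerm p := by
  rw [zetaMT, ← (Equiv.pnatEquivNat.prodCongr Equiv.pnatEquivNat).symm.tsum_eq]
  simp [mtTerm]

theorem summable_mtTerm : Summable mtTerm := by
  have hr : Summable fun n : ℕ ↦ ((n : ℝ) + 1) ^ (-(3 / 2) : ℝ) := by
    exact_mod_cast (summable_nat_add_iff 1).2
      (Real.summable_nat_rpow.2 (by norm_num : (-(3 / 2) : ℝ) < -1))
  exact .of_nonneg_of_le (fun p ↦ by unfold mtTerm; positivity)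
    (fun p ↦ one_div_mul_mul_add_le_rpow (by positivity) (by positivity))
    (hr.mul_of_nonneg hr (fun _ ↦ by positivity) fun _ ↦ by positivity)

theorem hasSum_mtTerm_row (m : ℕ) :
    HasSum (fun n ↦ mtTerm (m, n)) (harmonic (m + 1) / ((m : ℝ) + 1) ^ 2) := by
  have hf : Antitone fun n : ℕ ↦ 1 / ((n : ℝ) + 1) := fun a b hab ↦ by dsimp only; gcongr
  have htel := (hasSum_sub_add_of_antitone hf tendsto_one_div_add_atTop_nhds_zero_nat
    (m + 1)).div_const (((m : ℝ) + 1) ^ 2)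
  rw [show (harmonic (m + 1) : ℝ) = ∑ i ∈ range (m + 1), 1 / ((i : ℝ) + 1) by simp [harmonic]]
  refine htel.congr_fun fun n ↦ ?_
  rw [mtTerm]
  push_cast
  field_simp
  ring

theorem sum_antidiagonal_mtTerm (k : ℕ) :
    ∑ p ∈ antidiagonal k, mtTerm p = 2 * harmonic (k + 1) / ((k : ℝ) + 2) ^ 2 := by
  have hterm : ∀ p ∈ antidiagonal k, mtTerm p =
      (1 / ((p.1 : ℝ) + 1) + 1 / ((p.2 : ℝ) + 1)) / ((k : ℝ) + 2) ^ 2 := by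
    intro p hp
    rw [mtTerm, one_div_mul_mul_add_eq (by positivity) (by positivity), ← mem_antidiagonal.1 hp]
    push_cast
    ring
  have hswap : ∑ p ∈ antidiagonal k, 1 / ((p.2 : ℝ) + 1) =
      ∑ p ∈ antidiagonal k, 1 / ((p.1 : ℝ) + 1) :=
    Nat.sum_antidiagonal_swap.symm
  have hharmonic : ∑ p ∈ antidiagonal k, 1 / ((p.1 : ℝ) + 1) = harmonic (k + 1) := by
    rw [Nat.sum_antidiagonal_eq_sum_range_succ_mk]
    simp [harmonic]
  rw [sum_congr rfl hterm, ← sum_div, sum_add_distrib, hswap, hharmonic]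
  ring

theorem tsum_mtTerm : ∑' p, mtTerm p = 2 * ∑' n : ℕ, 1 / ((n : ℝ) + 1) ^ 3 := by
  set S := ∑' p, mtTerm p
  set D := ∑' n : ℕ, 1 / ((n : ℝ) + 1) ^ 3
  have hS : HasSum mtTerm S := summable_mtTerm.hasSum
  have hD : HasSum (fun n : ℕ ↦ 1 / ((n : ℝ) + 1) ^ 3) D := by
    refine Summable.hasSum ?_
    exact_mod_cast (summable_nat_add_iff 1).2 (Real.summable_one_div_nat_pow.2 (by norm_num))
  have hrows := hS.prod_fiberwise hasSum_mtTerm_row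
  have hdiag := hS.sum_antidiagonal
  simp only [sum_antidiagonal_mtTerm] at hdiag
  have hrows' : HasSum (fun k : ℕ ↦ (harmonic (k + 2) : ℝ) / ((k : ℝ) + 2) ^ 2) (S - 1) := by
    simpa [add_assoc, one_add_one_eq_two, show harmonic 1 = 1 by simp [harmonic], -harmonic_succ]
      using (hasSum_nat_add_iff' 1).2 hrows
  have hD' : HasSum (fun k : ℕ ↦ 1 / ((k : ℝ) + 2) ^ 3) (D - 1) := by
    simpa [add_assoc, one_add_one_eq_two] using (hasSum_nat_add_iff' 1).2 hD
  have hsplit (k : ℕ) : 2 * harmonic (k + 1) / ((k : ℝ) + 2) ^ 2 + 2 * (1 / ((k : ℝ) + 2) ^ 3) =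
      2 * ((harmonic (k + 2) : ℝ) / ((k : ℝ) + 2) ^ 2) := by
    rw [harmonic_succ (k + 1)]
    push_cast
    field_simp
    ring
  have := (hdiag.add (hD'.mul_left 2)).unique ((hrows'.mul_left 2).congr_fun hsplit)
  linarith

theorem zetaMT_one_one_one : zetaMT 1 1 1 = 2 * ∑' n : ℕ+, 1 / (n : ℝ) ^ 3 := by
  rw [zetaMT_one_one_one_eq_tsum_mtTerm, tsum_mtTerm,
    tsum_pnat_eq_tsum_succ (f := fun n : ℕ ↦ 1 / (n : ℝ) ^ 3)]
  push_cast
  rfl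
end

section
/- For positive integers h and k with k ≥ 2, the series Σ_{m,n ≥ 1} 1/(m^h (m+n)^k) converges, and more generally the r-fold Mordell–Tornheim series Σ_{m_1,…,m_r≥1} Π_j m_j^{-k_j} (m_1+⋯+m_r)^{-k_{r+1}} converges for all positive integer exponents k_1,…,k_{r+1} ≥ 1. -/
/-!
Every `m_j` is at most `m_1 + ⋯ + m_r`, hence so is the geometric mean `(m_1 ⋯ m_r)^(1/r)`.
As the last exponent is at least `1`, the general term is therefore bounded by
`∏ j, m_j^(-(k_j + 1/r))`, a product of convergent `p`-series. The two-variable series is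
dominated, via `n ≤ m + n`, by the case `r = 2` with exponents `(h, 1, k - 1)`.
-/

open Finset

theorem summable_fin_pi_prod {α : Type*} :
    ∀ {n : ℕ} (f : Fin n → α → ℝ), (∀ j, Summable (f j)) → (∀ j, 0 ≤ f j) →
      Summable (fun x : Fin n → α => ∏ j, f j (x j))
  | 0, _, _, _ => .of_finite
  | n + 1, f, hf, hf_nonneg => by
    have htail := summable_fin_pi_prod (fun j => f j.succ) (fun j => hf j.succ)
      (fun j => hf_nonneg j.succ)
    have hcons := (hf 0).mul_of_nonneg htail (hf_nonneg 0)
      (fun _ => prod_nonneg fun j _ => hf_nonneg j.succ _)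
    refine (Fin.consEquiv fun _ => α).summable_iff.mp (hcons.congr fun p => ?_)
    simp [Fin.consEquiv, Fin.prod_univ_succ]

theorem summable_pnat_rpow_inv {p : ℝ} (hp : 1 < p) :
    Summable (fun n : ℕ+ => ((n : ℝ) ^ p)⁻¹) :=
  (Real.summable_nat_rpow_inv.2 hp).comp_injective PNat.coe_injective

theorem prod_rpow_inv_card_le_sum {ι : Type*} [Fintype ι] [Nonempty ι] {x : ι → ℝ}
    (hx : ∀ i, 0 ≤ x i) : (∏ i, x i) ^ ((Fintype.card ι : ℝ)⁻¹) ≤ ∑ i, x i := by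
  have hS : 0 ≤ ∑ i, x i := sum_nonneg fun i _ => hx i
  have hprod : ∏ i, x i ≤ (∑ i, x i) ^ Fintype.card ι := by
    rw [← card_univ, ← prod_const]
    exact prod_le_prod (fun i _ => hx i) fun i _ => single_le_sum (fun j _ => hx j) (mem_univ i)
  calc (∏ i, x i) ^ ((Fintype.card ι : ℝ)⁻¹)
      ≤ ((∑ i, x i) ^ Fintype.card ι) ^ ((Fintype.card ι : ℝ)⁻¹) :=
        Real.rpow_le_rpow (prod_nonneg fun i _ => hx i) hprod (by positivity)
    _ = ∑ i, x i := Real.pow_rpow_inv_natCast hS Fintype.card_ne_zero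

theorem prod_pow_inv_mul_sum_pow_inv_le {ι : Type*} [Fintype ι] [Nonempty ι] {x : ι → ℝ}
    (hx : ∀ i, 1 ≤ x i) (a : ι → ℕ) {b : ℕ} (hb : 1 ≤ b) :
    (∏ i, x i ^ a i)⁻¹ * ((∑ i, x i) ^ b)⁻¹ ≤
      ∏ i, (x i ^ ((a i : ℝ) + (Fintype.card ι : ℝ)⁻¹))⁻¹ := by
  have hx0 i : 0 < x i := zero_lt_one.trans_le (hx i)
  have hS : 1 ≤ ∑ i, x i := (hx (Classical.arbitrary ι)).trans
    (single_le_sum (fun j _ => (hx0 j).le) (mem_univ _))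
  have hsplit : ∏ i, x i ^ ((a i : ℝ) + (Fintype.card ι : ℝ)⁻¹) =
      (∏ i, x i ^ a i) * (∏ i, x i) ^ ((Fintype.card ι : ℝ)⁻¹) := by
    rw [← Real.finsetProd_rpow _ _ (fun i _ => (hx0 i).le), ← prod_mul_distrib]
    exact prod_congr rfl fun i _ => by rw [Real.rpow_add (hx0 i), Real.rpow_natCast]
  have hpow : 0 < ∏ i, x i ^ a i := prod_pos fun i _ => pow_pos (hx0 i) _
  rw [prod_inv_distrib, hsplit, ← mul_inv]
  refine inv_anti₀ (mul_pos hpow (Real.rpow_pos_of_pos (prod_pos fun i _ => hx0 i) _))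
    (mul_le_mul_of_nonneg_left ?_ hpow.le)
  calc (∏ i, x i) ^ ((Fintype.card ι : ℝ)⁻¹) ≤ ∑ i, x i :=
        prod_rpow_inv_card_le_sum fun i => (hx0 i).le
    _ ≤ (∑ i, x i) ^ b := le_self_pow₀ hS (by omega)

theorem summable_prod_pow_inv_mul_sum_pow_inv {r : ℕ} (a : Fin r → ℕ) (b : ℕ)
    (ha : ∀ j, 1 ≤ a j) (hb : 1 ≤ b) :
    Summable (fun m : Fin r → ℕ+ => (∏ j, (m j : ℝ) ^ a j)⁻¹ * ((∑ j, (m j : ℝ)) ^ b)⁻¹) := by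
  rcases r.eq_zero_or_pos with rfl | hr
  · exact .of_finite
  have : Nonempty (Fin r) := Fin.pos_iff_nonempty.mp hr
  have hdom : Summable (fun m : Fin r → ℕ+ => ∏ j, ((m j : ℝ) ^ ((a j : ℝ) + (r : ℝ)⁻¹))⁻¹) := by
    refine summable_fin_pi_prod (fun j (n : ℕ+) => ((n : ℝ) ^ ((a j : ℝ) + (r : ℝ)⁻¹))⁻¹)
      (fun j => summable_pnat_rpow_inv ?_) (fun j n => by positivity)
    have : (1 : ℝ) ≤ a j := by exact_mod_cast ha j
    linarith [inv_pos.2 (Nat.cast_pos (α := ℝ) |>.2 hr)]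
  refine .of_nonneg_of_le (fun m => by positivity) (fun m => ?_) hdom
  have hm j : (1 : ℝ) ≤ m j := by exact_mod_cast (m j).pos
  simpa using prod_pow_inv_mul_sum_pow_inv_le hm a hb

theorem summable_pow_inv_mul_add_pow_inv {h k : ℕ} (hh : 1 ≤ h) (hk : 2 ≤ k) :
    Summable (fun p : ℕ+ × ℕ+ => ((p.1 : ℝ) ^ h * ((p.1 : ℝ) + (p.2 : ℝ)) ^ k)⁻¹) := by
  have hdom : Summable (fun p : ℕ+ × ℕ+ =>
      ((p.1 : ℝ) ^ h * p.2)⁻¹ * (((p.1 : ℝ) + p.2) ^ (k - 1))⁻¹) := by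
    refine ((summable_prod_pow_inv_mul_sum_pow_inv ![h, 1] (k - 1) ?_ (by omega)).comp_injective
      (finTwoArrowEquiv ℕ+).symm.injective).congr fun p => ?_
    · intro j; fin_cases j <;> simp [hh]
    · simp [finTwoArrowEquiv, Fin.prod_univ_two, Fin.sum_univ_two]
  refine .of_nonneg_of_le (fun p => by positivity) (fun p => ?_) hdom
  have hk' : k = k - 1 + 1 := by omega
  rw [← mul_inv, hk', pow_succ]
  refine inv_anti₀ (by positivity) ?_
  have : (p.2 : ℝ) ≤ p.1 + p.2 := le_add_of_nonneg_left (by positivity)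
  calc (p.1 : ℝ) ^ h * p.2 * ((p.1 : ℝ) + p.2) ^ (k - 1)
      ≤ (p.1 : ℝ) ^ h * ((p.1 : ℝ) + p.2) * ((p.1 : ℝ) + p.2) ^ (k - 1) := by gcongr
    _ = _ := by ring

theorem MT_series_summable_general (h k : ℕ) (hh : 0 < h) (hk : 2 ≤ k) (r : ℕ)
    (K : Fin (r + 1) → ℕ) (hK : ∀ i, 1 ≤ K i) :
    Summable (fun p : ℕ+ × ℕ+ => ((p.1 : ℝ) ^ h * ((p.1 : ℝ) + (p.2 : ℝ)) ^ k)⁻¹) ∧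
    Summable (fun m : Fin r → ℕ+ =>
      (∏ j, (m j : ℝ) ^ (K (Fin.castSucc j)))⁻¹ * ((∑ j, (m j : ℝ)) ^ (K (Fin.last r)))⁻¹) :=
  ⟨summable_pow_inv_mul_add_pow_inv hh hk,
    summable_prod_pow_inv_mul_sum_pow_inv _ _ (fun _ => hK _) (hK _)⟩

theorem MT_series_summable (h k : ℕ) (hh : 0 < h) (hk : 2 ≤ k) (r : ℕ) (hr : 0 < r)
    (K : Fin (r + 1) → ℕ) (hK : ∀ i, 1 ≤ K i) :
    Summable (fun p : ℕ+ × ℕ+ => ((p.1 : ℝ) ^ h * ((p.1 : ℝ) + (p.2 : ℝ)) ^ k)⁻¹) ∧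
    Summable (fun m : Fin r → ℕ+ =>
      (∏ j, (m j : ℝ) ^ (K (Fin.castSucc j)))⁻¹ * ((∑ j, (m j : ℝ)) ^ (K (Fin.last r)))⁻¹) :=
  MT_series_summable_general h k hh hk r K hK
end
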